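/- arXiv:1712.08572 — 6 statements merged into one kernel-verified Lean document; each statement's English description precedes it below -/
import Mathlib

section
/- If A and B are n×n complex matrices and 1 ≤ k ≤ n, then S_k(AA*)·S_k(BB*) ≥ |S_k(AB*)|², where S_k(M) denotes the normalized k-th elementary symmetric function of M, i.e., the coefficient of t^{n-k} in (binom(n,k))^{-1}·det(M + t·Id). -/
/-!
Expanding `det (M + t)` into principal minors, `binom(n,k) · S_k(M)` is the sum of the `k × k`
principal minors of `M`. By Cauchy–Binet, each principal minor of `A B*` on rows `s` is a sum of
`det A[s, f] · conj (det B[s, f])`; summing over the maps `f : s → Fin n` rather than over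
`k`-subsets counts every term `k!` times but avoids ordering the columns. Hence
`binom(n,k) · k! · S_k(A B*)` is the Hermitian inner product of the vectors of `k`-minors of `A`
and of `B`, while `S_k(A A*)` and `S_k(B B*)` are their squared norms, and the inequality is
Cauchy–Schwarz.
-/

/-- The normalized `k`-th elementary symmetric function of an `n × n` complex matrix `M`:
the coefficient of `t^(n-k)` in `(binom(n,k))⁻¹ · det (M + t·Id)`. -/
noncomputable def Sk (n k : ℕ) (M : Matrix (Fin n) (Fin n) ℂ) : ℂ :=
  ((n.choose k : ℂ))⁻¹ *
    ((Matrix.det (M.map Polynomial.C +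
      (Polynomial.X : Polynomial ℂ) • (1 : Matrix (Fin n) (Fin n) (Polynomial ℂ)))).coeff (n - k))

open Matrix Polynomial Finset Equiv
open scoped Nat

section CauchyBinet

variable {R : Type*} [CommRing R] {ι κ : Type*} [Fintype ι] [DecidableEq ι] [Fintype κ]

theorem Matrix.det_mul_eq_sum_prod_mul_det_submatrix (X : Matrix ι κ R) (Y : Matrix κ ι R) :
    (X * Y).det = ∑ f : ι → κ, (∏ i, Y (f i) i) * (X.submatrix id f).det := by
  simp only [det_apply', mul_apply, prod_univ_sum, Fintype.piFinset_univ, mul_sum]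
  rw [sum_comm]
  refine sum_congr rfl fun f _ => sum_congr rfl fun σ _ => ?_
  simp only [prod_mul_distrib, submatrix_apply, id_eq]
  ring

theorem Matrix.factorial_card_mul_det_mul (X : Matrix ι κ R) (Y : Matrix κ ι R) :
    ((Fintype.card ι)! : R) * (X * Y).det
      = ∑ f : ι → κ, (X.submatrix id f).det * (Y.submatrix f id).det := by
  have hperm : ∀ σ : Perm ι, (X * Y).det
      = ∑ f : ι → κ, (X.submatrix id f).det * ((Perm.sign σ : ℤ) * ∏ i, Y (f (σ i)) i) := by
    intro σ
    -- reindex by `f ↦ f ∘ σ`, which multiplies `det (X.submatrix id f)` by `sign σ`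
    rw [det_mul_eq_sum_prod_mul_det_submatrix]
    refine (Fintype.sum_equiv (σ.symm.arrowCongr (Equiv.refl κ)) _ _ fun f => ?_).symm
    change _ = (∏ i, Y (f (σ i)) i) * ((X.submatrix id f).submatrix id σ).det
    rw [det_permute']
    ring
  calc ((Fintype.card ι)! : R) * (X * Y).det = ∑ _σ : Perm ι, (X * Y).det := by
        simp [Fintype.card_perm]
    _ = ∑ f : ι → κ, (X.submatrix id f).det *
          ∑ σ : Perm ι, (Perm.sign σ : ℤ) * ∏ i, Y (f (σ i)) i := by
        rw [sum_congr rfl fun σ _ => hperm σ, sum_comm]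
        simp only [mul_sum]
    _ = _ := by simp [det_apply']

end CauchyBinet

theorem Matrix.coeff_det_map_C_add_X_smul_one {R : Type*} [CommRing R] {n : Type*} [Fintype n]
    [DecidableEq n] (M : Matrix n n R) {k : ℕ} (hk : k ≤ Fintype.card n) :
    (det (M.map C + (X : R[X]) • 1)).coeff (Fintype.card n - k)
      = ∑ s ∈ univ.powersetCard k, (M.submatrix (Subtype.val : s → n) Subtype.val).det := by
  have hchar : M.map C + (X : R[X]) • 1 = charmatrix (-M) := by
    ext i j
    by_cases hij : i = j <;> simp [hij, add_comm]
  rw [hchar, ← charpoly, charpoly_coeff_eq_sum_minors _ _ hk, mul_sum]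
  refine sum_congr rfl fun s hs => ?_
  rw [submatrix_neg, Pi.neg_apply, Pi.neg_apply, det_neg, Fintype.card_coe,
    (mem_powersetCard.mp hs).2, ← mul_assoc, ← mul_pow, neg_mul_neg, one_mul, one_pow, one_mul]

section Gram

variable {R : Type*} [CommRing R] [StarRing R] {m κ : Type*} [DecidableEq m] [Fintype κ]

theorem Matrix.factorial_card_mul_det_submatrix_mul_conjTranspose (A B : Matrix m κ R)
    (s : Finset m) :
    ((#s)! : R) * ((A * Bᴴ).submatrix (Subtype.val : s → m) Subtype.val).det
      = ∑ f : s → κ, (A.submatrix Subtype.val f).det * star (B.submatrix Subtype.val f).det := by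
  rw [submatrix_mul _ _ _ id _ Function.bijective_id, ← Fintype.card_coe s,
    factorial_card_mul_det_mul]
  refine sum_congr rfl fun f _ => ?_
  rw [submatrix_submatrix, submatrix_submatrix, ← conjTranspose_submatrix, det_conjTranspose]
  rfl

theorem Matrix.factorial_mul_coeff_det_mul_conjTranspose_add_X_smul_one [Fintype m]
    (A B : Matrix m κ R) {k : ℕ} (hk : k ≤ Fintype.card m) :
    (k ! : R) * (det ((A * Bᴴ).map C + (X : R[X]) • 1)).coeff (Fintype.card m - k)
      = ∑ p ∈ (univ.powersetCard k).sigma fun s : Finset m => (univ : Finset (s → κ)),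
          (A.submatrix Subtype.val p.2).det * star (B.submatrix Subtype.val p.2).det := by
  rw [coeff_det_map_C_add_X_smul_one _ hk, mul_sum, sum_sigma]
  refine sum_congr rfl fun s hs => ?_
  rw [← (mem_powersetCard.mp hs).2, factorial_card_mul_det_submatrix_mul_conjTranspose]

end Gram

theorem RCLike.norm_sum_mul_star_sq_le {𝕜 ι : Type*} [RCLike 𝕜] (s : Finset ι) (f g : ι → 𝕜) :
    ‖∑ i ∈ s, f i * star (g i)‖ ^ 2
      ≤ re (∑ i ∈ s, f i * star (f i)) * re (∑ i ∈ s, g i * star (g i)) := by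
  have hre : ∀ h : ι → 𝕜, re (∑ i ∈ s, h i * star (h i)) = ∑ i ∈ s, ‖h i‖ ^ 2 := fun h => by
    simp only [RCLike.star_def, RCLike.mul_conj, ← RCLike.ofReal_pow, map_sum, RCLike.ofReal_re]
  have htri : ‖∑ i ∈ s, f i * star (g i)‖ ≤ ∑ i ∈ s, ‖f i‖ * ‖g i‖ :=
    (norm_sum_le _ _).trans_eq <| sum_congr rfl fun i _ => by simp [norm_mul]
  rw [hre, hre]
  exact (pow_le_pow_left₀ (norm_nonneg _) htri 2).trans (sum_mul_sq_le_sq_mul_sq _ _ _)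

theorem Sk_mul_conjTranspose {n k : ℕ} (hkn : k ≤ n) (A B : Matrix (Fin n) (Fin n) ℂ) :
    Sk n k (A * Bᴴ) = (((n.choose k : ℝ) * k !)⁻¹ : ℝ) *
      ∑ p ∈ (univ.powersetCard k).sigma fun s : Finset (Fin n) => (univ : Finset (s → Fin n)),
        (A.submatrix Subtype.val p.2).det * star (B.submatrix Subtype.val p.2).det := by
  have h := factorial_mul_coeff_det_mul_conjTranspose_add_X_smul_one A B
    (hkn.trans_eq (Fintype.card_fin n).symm)
  rw [Fintype.card_fin] at h
  have hfact : (k ! : ℂ) ≠ 0 := by exact_mod_cast k.factorial_ne_zero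
  rw [Sk, ← h]
  push_cast
  field_simp

theorem sk_gram_inequality_general (n k : ℕ) (hkn : k ≤ n)
    (A B : Matrix (Fin n) (Fin n) ℂ) :
    ‖Sk n k (A * B.conjTranspose)‖ ^ 2 ≤ (Sk n k (A * A.conjTranspose)).re * (Sk n k (B * B.conjTranspose)).re := by
  simp only [Sk_mul_conjTranspose hkn, norm_mul, Complex.re_ofReal_mul, Complex.norm_real,
    Real.norm_of_nonneg (inv_nonneg.mpr (by positivity : (0 : ℝ) ≤ n.choose k * k !)), mul_pow]
  calc _ ≤ ((n.choose k : ℝ) * k !)⁻¹ ^ 2 * (_ * _) := by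
        gcongr
        exact RCLike.norm_sum_mul_star_sq_le _ _ _
    _ = _ := by simp only [RCLike.re_to_complex]; ring

theorem sk_gram_inequality (n k : ℕ) (hk1 : 1 ≤ k) (hkn : k ≤ n)
    (A B : Matrix (Fin n) (Fin n) ℂ) :
    ‖Sk n k (A * B.conjTranspose)‖ ^ 2 ≤ (Sk n k (A * A.conjTranspose)).re * (Sk n k (B * B.conjTranspose)).re :=
  sk_gram_inequality_general n k hkn A B
end

section
/- Let a_1,...,a_k and b_1,...,b_k be two collections of vectors in ℂ^n. Then det(⟨a_p, a_q⟩)_{p,q} · det(⟨b_p, b_q⟩)_{p,q} ≥ |det(⟨a_p, b_q⟩)_{p,q}|², where ⟨·,·⟩ is the standard Hermitian inner product. -/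
/-!
By Cauchy–Binet, `det (Aᴴ * B) = ∑ S, star (det A_S) * det B_S`, the sum running over the
`k`-element sets `S` of rows: this is the inner product of the Plücker vectors (maximal minors)
of `A` and `B`. In an orthonormal basis, all three determinants of inner products take this
form, and the inequality is the Cauchy–Schwarz inequality for Plücker vectors.
-/

open Matrix Finset Equiv

section orderEmbedding

variable {ι : Type*} [LinearOrder ι] {k : ℕ}

theorem OrderEmbedding.injective_comp_perm :
    Function.Injective fun x : (Fin k ↪o ι) × Perm (Fin k) => ⇑x.1 ∘ ⇑x.2 := by
  rintro ⟨s, σ⟩ ⟨t, τ⟩ h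
  have hst : s = t := by
    refine DFunLike.coe_injective ((s.strictMono.range_inj t.strictMono).mp ?_)
    simpa only [Set.range_comp, σ.range_eq_univ, τ.range_eq_univ, Set.image_univ] using
      congrArg Set.range h
  subst hst
  exact Prod.ext rfl (Equiv.ext fun i => s.injective (congrFun h i))

theorem Function.Injective.exists_orderEmbedding_comp_perm {p : Fin k → ι}
    (hp : Function.Injective p) : ∃ x : (Fin k ↪o ι) × Perm (Fin k), ⇑x.1 ∘ ⇑x.2 = p := by
  have hmono : StrictMono (p ∘ Tuple.sort p) :=
    (Tuple.monotone_sort p).strictMono_of_injective (hp.comp (Tuple.sort p).injective)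
  refine ⟨(OrderEmbedding.ofStrictMono _ hmono, (Tuple.sort p)⁻¹), ?_⟩
  funext i
  simp

end orderEmbedding

namespace Matrix

variable {R ι : Type*} [CommRing R] {k : ℕ}

theorem det_mul_eq_sum_det_submatrix_mul_prod [Fintype ι] (M : Matrix (Fin k) ι R)
    (N : Matrix ι (Fin k) R) :
    (M * N).det = ∑ p : Fin k → ι, (M.submatrix id p).det * ∏ i, N (p i) i := by
  simp only [det_apply', mul_apply, prod_univ_sum, mul_sum, Fintype.piFinset_univ, sum_mul]
  rw [sum_comm]
  refine sum_congr rfl fun p _ => sum_congr rfl fun σ _ => ?_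
  simp only [submatrix_apply, id_eq, prod_mul_distrib, mul_assoc]

theorem sum_perm_det_submatrix_comp_mul_prod (M : Matrix (Fin k) ι R) (N : Matrix ι (Fin k) R)
    (s : Fin k → ι) :
    ∑ σ : Perm (Fin k), (M.submatrix id (s ∘ σ)).det * ∏ i, N (s (σ i)) i =
      (M.submatrix id s).det * (N.submatrix s id).det := by
  simp only [det_apply' (N.submatrix s id), mul_sum, submatrix_apply, id_eq]
  refine sum_congr rfl fun σ _ => ?_
  rw [show M.submatrix id (s ∘ σ) = (M.submatrix id s).submatrix id σ from rfl, det_permute']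
  ring

theorem det_mul_eq_sum_orderEmbedding [Fintype ι] [LinearOrder ι] (M : Matrix (Fin k) ι R)
    (N : Matrix ι (Fin k) R) :
    (M * N).det = ∑ s : Fin k ↪o ι, (M.submatrix id s).det * (N.submatrix s id).det := by
  classical
  have h_nonzero_injective : ∀ p ∈ (univ : Finset (Fin k → ι)),
      (M.submatrix id p).det * ∏ i, N (p i) i ≠ 0 → Function.Injective p := by
    intro p _ hp i j hij
    by_contra hne
    exact hp (by rw [det_zero_of_column_eq hne fun r => by simp [hij], zero_mul])
  have h_image : univ.filter (fun p : Fin k → ι => Function.Injective p) =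
      univ.image fun x : (Fin k ↪o ι) × Perm (Fin k) => ⇑x.1 ∘ ⇑x.2 := by
    ext p
    simp only [mem_filter, mem_univ, true_and, mem_image]
    exact ⟨fun hp => hp.exists_orderEmbedding_comp_perm,
      by rintro ⟨x, rfl⟩; exact x.1.injective.comp x.2.injective⟩
  rw [det_mul_eq_sum_det_submatrix_mul_prod, ← sum_filter_of_ne h_nonzero_injective, h_image,
    sum_image fun x _ y _ h => OrderEmbedding.injective_comp_perm h, ← univ_product_univ,
    sum_product]
  exact sum_congr rfl fun s _ => sum_perm_det_submatrix_comp_mul_prod M N s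

end Matrix

namespace Matrix

variable {𝕜 ι : Type*} [RCLike 𝕜] [Fintype ι] [LinearOrder ι] {k : ℕ}

noncomputable def plucker (A : Matrix ι (Fin k) 𝕜) : EuclideanSpace 𝕜 (Fin k ↪o ι) :=
  WithLp.toLp 2 fun s => (A.submatrix s id).det

theorem det_conjTranspose_mul_eq_inner_plucker (A B : Matrix ι (Fin k) 𝕜) :
    (Aᴴ * B).det = inner 𝕜 (plucker A) (plucker B) := by
  rw [det_mul_eq_sum_orderEmbedding, EuclideanSpace.inner_eq_star_dotProduct, dotProduct]
  refine sum_congr rfl fun s _ => ?_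
  rw [mul_comm, ← conjTranspose_submatrix, det_conjTranspose]
  rfl

theorem norm_det_conjTranspose_mul_sq_le (A B : Matrix ι (Fin k) 𝕜) :
    ‖(Aᴴ * B).det‖ ^ 2 ≤ RCLike.re (Aᴴ * A).det * RCLike.re (Bᴴ * B).det := by
  simp only [det_conjTranspose_mul_eq_inner_plucker, inner_self_eq_norm_sq, ← mul_pow]
  exact pow_le_pow_left₀ (norm_nonneg _) (norm_inner_le_norm _ _) 2

end Matrix

section InnerProductSpace

variable {𝕜 E ι n : Type*} [RCLike 𝕜] [NormedAddCommGroup E] [InnerProductSpace 𝕜 E]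

theorem OrthonormalBasis.of_inner_eq_conjTranspose_mul [Fintype ι] (e : OrthonormalBasis ι 𝕜 E)
    (a b : n → E) :
    of (fun p q => inner 𝕜 (a p) (b q)) =
      (of fun i p => e.repr (a p) i)ᴴ * of fun i q => e.repr (b q) i := by
  ext p q
  simp [mul_apply, e.repr_apply_apply, e.sum_inner_mul_inner]

theorem norm_det_inner_sq_le_re_det_gram_mul [FiniteDimensional 𝕜 E] {k : ℕ} (a b : Fin k → E) :
    ‖(of fun p q => inner 𝕜 (a p) (b q)).det‖ ^ 2 ≤
      RCLike.re (gram 𝕜 a).det * RCLike.re (gram 𝕜 b).det := by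
  let e := stdOrthonormalBasis 𝕜 E
  rw [gram, gram, e.of_inner_eq_conjTranspose_mul, e.of_inner_eq_conjTranspose_mul,
    e.of_inner_eq_conjTranspose_mul]
  exact norm_det_conjTranspose_mul_sq_le _ _

end InnerProductSpace

theorem gram_det_inequality (n k : ℕ) (a b : Fin k → EuclideanSpace ℂ (Fin n)) :
    ‖Matrix.det (fun p q : Fin k => (inner ℂ (a p) (b q) : ℂ))‖ ^ 2 ≤
      (Matrix.det (fun p q : Fin k => (inner ℂ (a p) (a q) : ℂ))).re *
        (Matrix.det (fun p q : Fin k => (inner ℂ (b p) (b q) : ℂ))).re :=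
  norm_det_inner_sq_le_re_det_gram_mul a b
end

section
/- Let Γ ⊊ ℝ^n be an open convex symmetric cone containing the positive orthant Γ_n. Then Γ is contained in the half-space Γ_1 = {x ∈ ℝ^n : x_1 + ... + x_n > 0}. -/
/-!
Averaging the cyclic shifts of a point `x ∈ Γ` with `∑ xᵢ ≤ 0` produces, by convexity and symmetry,
the constant vector with entries `(∑ xᵢ) / n ≤ 0`. Since `Γ` is open it then contains a vector with
all entries negative, `v` say. Every `y` is `t • v + (y - t • v)` with `t > 0` and `y - t • v` in
the positive orthant once `t` is large, so the convex cone `Γ` would be all of `ℝⁿ`.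
-/

open Filter Topology

theorem Convex.add_mem_of_forall_smul_mem {E : Type*} [AddCommGroup E] [Module ℝ E] {s : Set E}
    (hconv : Convex ℝ s) (hcone : ∀ x ∈ s, ∀ t : ℝ, 0 < t → t • x ∈ s) {x y : E}
    (hx : x ∈ s) (hy : y ∈ s) : x + y ∈ s := by
  have hmid : (1 / 2 : ℝ) • x + (1 / 2 : ℝ) • y ∈ s :=
    hconv hx hy (by norm_num) (by norm_num) (by norm_num)
  simpa [smul_add, smul_smul] using hcone _ hmid 2 two_pos

theorem IsOpen.exists_pos_sub_smul_mem {E : Type*} [AddCommGroup E] [Module ℝ E]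
    [TopologicalSpace E] [ContinuousSub E] [ContinuousSMul ℝ E] {U : Set E} (hU : IsOpen U)
    {v : E} (hv : v ∈ U) (w : E) : ∃ ε : ℝ, 0 < ε ∧ v - ε • w ∈ U := by
  have hlim : Tendsto (fun t : ℝ => v - t • w) (𝓝[>] 0) (𝓝 v) :=
    (Continuous.tendsto' (by fun_prop) 0 v (by simp)).mono_left nhdsWithin_le_nhds
  obtain ⟨ε, hmem, hε⟩ := ((hlim.eventually (hU.mem_nhds hv)).and self_mem_nhdsWithin).exists
  exact ⟨ε, hε, hmem⟩

theorem Convex.const_mean_mem_of_shift_invariant {ι : Type*} [Fintype ι] [AddGroup ι]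
    {Γ : Set (ι → ℝ)} (hconv : Convex ℝ Γ) (hshift : ∀ k : ι, ∀ x ∈ Γ, (fun i => x (i + k)) ∈ Γ)
    {x : ι → ℝ} (hx : x ∈ Γ) : Function.const ι ((∑ i, x i) / Fintype.card ι) ∈ Γ := by
  have hcard : (0 : ℝ) < Fintype.card ι := by exact_mod_cast Fintype.card_pos
  have havg := hconv.sum_mem (t := Finset.univ) (w := fun _ => (Fintype.card ι : ℝ)⁻¹)
    (z := fun k i => x (i + k)) (fun _ _ => by positivity)
    (by simp [Finset.card_univ, hcard.ne']) (fun k _ => hshift k x hx)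
  convert havg using 1
  ext i
  have hshift_sum : ∑ k, x (i + k) = ∑ i, x i := Equiv.sum_comp (Equiv.addLeft i) x
  simp [Finset.sum_apply, ← Finset.mul_sum, hshift_sum, div_eq_inv_mul]

theorem eq_univ_of_orthant_subset_of_neg_mem {ι : Type*} [Finite ι] {Γ : Set (ι → ℝ)}
    (hconv : Convex ℝ Γ) (hcone : ∀ x ∈ Γ, ∀ t : ℝ, 0 < t → t • x ∈ Γ) (horthant : {x : ι → ℝ | ∀ i, 0 < x i} ⊆ Γ)
    {v : ι → ℝ} (hv : v ∈ Γ) (hneg : ∀ i, v i < 0) : Γ = Set.univ := by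
  refine Set.eq_univ_of_forall fun y => ?_
  have hlarge : ∀ i, ∀ᶠ t : ℝ in atTop, 0 < y i - t * v i := fun i =>
    (tendsto_atTop_add_const_left _ (y i)
      (tendsto_id.atTop_mul_const (neg_pos.2 (hneg i)))).eventually_gt_atTop 0 |>.mono
      fun t ht => by simpa [sub_eq_add_neg] using ht
  obtain ⟨t, ht, hpos⟩ := ((eventually_all.2 hlarge).and (eventually_gt_atTop 0)).exists
  rw [← add_sub_cancel (t • v) y]
  exact hconv.add_mem_of_forall_smul_mem hcone (hcone v hv t hpos) (horthant ht)

theorem admissible_cone_subset_halfspace (n : ℕ) (Γ : Set (Fin n → ℝ))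
    (hopen : IsOpen Γ) (hconv : Convex ℝ Γ) (hne : Γ ≠ Set.univ)
    (hcone : ∀ x ∈ Γ, ∀ t : ℝ, 0 < t → t • x ∈ Γ)
    (hsymm : ∀ σ : Equiv.Perm (Fin n), ∀ x ∈ Γ, (fun i => x (σ i)) ∈ Γ)
    (horthant : {x : Fin n → ℝ | ∀ i, 0 < x i} ⊆ Γ) :
    Γ ⊆ {x : Fin n → ℝ | 0 < ∑ i, x i} := by
  intro x hx
  by_contra hsum
  rcases Nat.eq_zero_or_pos n with rfl | hn
  · exact hne (Subsingleton.eq_univ_of_nonempty ⟨x, hx⟩)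
  have : NeZero n := ⟨hn.ne'⟩
  have hmean := hconv.const_mean_mem_of_shift_invariant (fun k => hsymm (Equiv.addRight k)) hx
  obtain ⟨ε, hε, hmem⟩ := hopen.exists_pos_sub_smul_mem hmean (Function.const _ 1)
  refine hne (eq_univ_of_orthant_subset_of_neg_mem hconv hcone horthant hmem fun i => ?_)
  have hmean_nonpos : (∑ i, x i) / Fintype.card (Fin n) ≤ 0 :=
    div_nonpos_of_nonpos_of_nonneg (not_lt.1 hsum) (Nat.cast_nonneg _)
  simp only [Pi.sub_apply, Function.const_apply, Pi.smul_apply, smul_eq_mul, mul_one]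
  linarith
end

section
/- Suppose λ_1 ≥ λ_2 ≥ ... ≥ λ_n are real numbers satisfying Σ_{i=1}^n arctan(λ_i) ≥ (n-2)·π/2 + δ for some δ > 0 (with n ≥ 2). Then λ_1 ≥ ... ≥ λ_{n-1} > 0 and |λ_n| ≤ λ_{n-1}. -/
open Real

theorem supercritical_eigenvalues (n : ℕ) (hn : 2 ≤ n) (lam : Fin n → ℝ)
    (hmono : ∀ i j : Fin n, i ≤ j → lam j ≤ lam i) (δ : ℝ) (hδ : 0 < δ)
    (hsum : (n - 2 : ℝ) * (π / 2) + δ ≤ ∑ i, arctan (lam i)) :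
    (∀ i : Fin n, (i : ℕ) + 1 < n → 0 < lam i) ∧
      |lam ⟨n - 1, by omega⟩| ≤ lam ⟨n - 2, by omega⟩ := by
  have key : ∀ a b : Fin n, a ≠ b → δ ≤ arctan (lam a) + arctan (lam b) := by
    intro a b hab
    have hsplit := Finset.sum_add_sum_compl ({a, b} : Finset (Fin n))
      (fun i => arctan (lam i))
    have hcard : (({a, b} : Finset (Fin n))ᶜ).card = n - 2 := by
      rw [Finset.card_compl, Finset.card_pair hab, Fintype.card_fin]
    have hrest : ∑ i ∈ ({a, b} : Finset (Fin n))ᶜ, arctan (lam i)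
        ≤ (n - 2 : ℝ) * (π / 2) := by
      calc ∑ i ∈ ({a, b} : Finset (Fin n))ᶜ, arctan (lam i)
          ≤ (({a, b} : Finset (Fin n))ᶜ).card • (π / 2) :=
            Finset.sum_le_card_nsmul _ _ _ (fun i _ => (arctan_lt_pi_div_two _).le)
        _ = (n - 2 : ℝ) * (π / 2) := by
            rw [hcard, nsmul_eq_mul, Nat.cast_sub hn]
            norm_num
    have hpair : ∑ i ∈ ({a, b} : Finset (Fin n)), arctan (lam i)
        = arctan (lam a) + arctan (lam b) := Finset.sum_pair hab
    nlinarith [hsum, hsplit, hrest, hpair]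
  have hlast : ∀ a : Fin n, a ≤ ⟨n - 1, by omega⟩ := by
    intro a
    rw [Fin.le_def]
    simp only [Fin.val_mk]
    have := a.isLt
    omega
  constructor
  · intro i hi
    have hne : i ≠ ⟨n - 1, by omega⟩ := by
      intro h
      apply absurd (congrArg Fin.val h)
      simp only [Fin.val_mk]
      omega
    have h1 := key i ⟨n - 1, by omega⟩ hne
    have h2 : arctan (lam ⟨n - 1, by omega⟩) ≤ arctan (lam i) :=
      Real.arctan_strictMono.monotone (hmono i _ (hlast i))
    have h3 : 0 < arctan (lam i) := by linarith
    by_contra hle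
    push_neg at hle
    have : arctan (lam i) ≤ 0 := by
      rw [← Real.arctan_zero]
      exact Real.arctan_strictMono.monotone hle
    linarith
  · have hne : (⟨n - 2, by omega⟩ : Fin n) ≠ ⟨n - 1, by omega⟩ := by
      intro h
      apply absurd (congrArg Fin.val h)
      simp only [Fin.val_mk]
      omega
    have h1 := key ⟨n - 2, by omega⟩ ⟨n - 1, by omega⟩ hne
    have hle : lam ⟨n - 1, by omega⟩ ≤ lam ⟨n - 2, by omega⟩ :=
      hmono _ _ (Fin.mk_le_mk.mpr (by omega))
    rw [abs_le]
    refine ⟨?_, hle⟩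
    have h2 : arctan (-lam ⟨n - 2, by omega⟩) < arctan (lam ⟨n - 1, by omega⟩) := by
      rw [Real.arctan_neg]
      linarith
    have := Real.arctan_strictMono.lt_iff_lt.mp h2
    linarith
end

section
/- Suppose λ_1 ≥ λ_2 ≥ ... ≥ λ_n are real numbers with Σ_{i=1}^n arctan(λ_i) ≥ (n-2)·π/2 + δ for some δ > 0 (n ≥ 2). Then Σ_{i=1}^n λ_i ≥ 0. -/
open Real

theorem supercritical_sum_nonneg (n : ℕ) (hn : 2 ≤ n) (lam : Fin n → ℝ)
    (hmono : ∀ i j : Fin n, i ≤ j → lam j ≤ lam i) (δ : ℝ) (hδ : 0 < δ)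
    (hsum : (n - 2 : ℝ) * (π / 2) + δ ≤ ∑ i, arctan (lam i)) :
    0 ≤ ∑ i, lam i := by
  have hn1 : n - 1 < n := by omega
  have hn2 : n - 2 < n := by omega
  set a : Fin n := ⟨n - 1, hn1⟩ with ha
  set b : Fin n := ⟨n - 2, hn2⟩ with hb
  have hne : b ≠ a := by
    simp only [ha, hb, Fin.ne_iff_vne]
    omega
  have hbmem : b ∈ (Finset.univ.erase a) := Finset.mem_erase.2 ⟨hne, Finset.mem_univ b⟩
  have hsplit : ∀ f : Fin n → ℝ, ∑ i, f i =
      (∑ i ∈ ((Finset.univ.erase a).erase b), f i) + f b + f a := by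
    intro f
    rw [Finset.sum_erase_add _ _ hbmem, Finset.sum_erase_add _ _ (Finset.mem_univ a)]
  have hcard : ((Finset.univ.erase a).erase b).card = n - 2 := by
    rw [Finset.card_erase_of_mem hbmem, Finset.card_erase_of_mem (Finset.mem_univ a),
      Finset.card_univ, Fintype.card_fin]
    omega
  have hbound : ∑ i ∈ ((Finset.univ.erase a).erase b), arctan (lam i)
      ≤ (n - 2 : ℝ) * (π / 2) := by
    have h := Finset.sum_le_card_nsmul ((Finset.univ.erase a).erase b)
      (fun i => arctan (lam i)) (π / 2) (fun x _ => (arctan_lt_pi_div_two _).le)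
    rw [hcard, nsmul_eq_mul] at h
    have : ((n - 2 : ℕ) : ℝ) = (n : ℝ) - 2 := by
      push_cast [Nat.cast_sub hn]; ring
    rw [this] at h
    exact h
  have hkey : δ ≤ arctan (lam b) + arctan (lam a) := by
    have := hsplit (fun i => arctan (lam i))
    rw [this] at hsum
    linarith
  have hba : b ≤ a := by
    simp only [ha, hb, Fin.le_def]; omega
  have hab : lam a ≤ lam b := hmono b a hba
  have harctan_mono : ∀ x y : ℝ, x ≤ y → arctan x ≤ arctan y := fun x y h =>
    Real.arctan_strictMono.monotone h
  have hb_pos : 0 < lam b := by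
    have h1 : arctan (lam a) ≤ arctan (lam b) := harctan_mono _ _ hab
    have h2 : 0 < arctan (lam b) := by linarith
    have := Real.arctan_strictMono.lt_iff_lt (a := 0) (b := lam b)
    rw [Real.arctan_zero] at this
    exact this.mp h2
  have hsum_ba : 0 ≤ lam b + lam a := by
    by_contra h
    push_neg at h
    have h1 : lam b < -lam a := by linarith
    have h2 : arctan (lam b) < arctan (-lam a) := Real.arctan_strictMono h1
    rw [Real.arctan_neg] at h2
    linarith
  have hnonneg : ∀ i ∈ (Finset.univ.erase a).erase b, 0 ≤ lam i := by
    intro i hi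
    have hia : i ≠ a := (Finset.mem_erase.1 (Finset.mem_erase.1 hi).2).1
    have hib : i ≤ b := by
      simp only [hb, Fin.le_def]
      have : i.1 ≠ n - 1 := by
        intro hc
        exact hia (Fin.ext hc)
      omega
    have := hmono i b hib
    linarith
  rw [hsplit lam]
  have : 0 ≤ ∑ i ∈ ((Finset.univ.erase a).erase b), lam i :=
    Finset.sum_nonneg hnonneg
  linarith
end

section
/- For every σ ∈ ((n-2)·π/2, n·π/2), the set Γ^σ := {λ ∈ ℝ^n : Σ_{i=1}^n arctan(λ_i) > σ} is convex. -/
/-!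
Induct on `n`, splitting off the coordinate `λ₀`. For `σ > (m - 1)π/2` the set `Γ^σ` in `ℝ^(m+1)`
is the strict epigraph of `φ μ = tan (σ - ∑ arctan μᵢ)` over `Γ^(σ - π/2)` in `ℝ^m`, which is
convex by induction, so it suffices that `φ` is convex there. Along a line `λ(t) = x + t d` write
`φ = tan ∘ u`; then `(tan ∘ u)'' = (1 + tan² u)(2 tan u · u'² + u'')` and, with
`aᵢ = dᵢ / (1 + λᵢ²)` and `r = tan u`, the bracket is `2 (∑ λᵢ aᵢ² + r (∑ aᵢ)²)`. Since
`∑ arctan λᵢ + arctan r = σ`, this is the quadratic form `∑ xᵢ aᵢ²` on the hyperplane `∑ aᵢ = 0`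
for a vector `x` with `∑ arctan xᵢ > (N - 2)π/2`. Such an `x` has at most one negative entry `x_k`,
and the subadditivity of `arctan` on `[0, ∞)` gives `∑_{i ≠ k} 1/xᵢ ≤ 1/|x_k|`, so Cauchy–Schwarz
makes the form nonnegative.
-/

open Real Finset Set

namespace Real

theorem arctan_add_le_of_nonneg {a b : ℝ} (ha : 0 ≤ a) (hb : 0 ≤ b) :
    arctan (a + b) ≤ arctan a + arctan b := by
  rcases lt_or_ge (a * b) 1 with hab | hab
  · rw [arctan_add hab, arctan_le_arctan_iff, le_div_iff₀ (by linarith)]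
    nlinarith [mul_nonneg (mul_nonneg ha hb) (add_nonneg ha hb)]
  · have ha' : 0 < a := by
      by_contra! h
      nlinarith
    have hb' : a⁻¹ ≤ b := by rwa [inv_le_iff_one_le_mul₀' ha']
    calc arctan (a + b) ≤ π / 2 := (arctan_lt_pi_div_two _).le
      _ = arctan a + arctan a⁻¹ := by rw [arctan_inv_of_pos ha']; ring
      _ ≤ arctan a + arctan b := by gcongr

theorem arctan_sum_le_sum_arctan {ι : Type*} (s : Finset ι) {x : ι → ℝ} (hx : ∀ i ∈ s, 0 ≤ x i) :
    arctan (∑ i ∈ s, x i) ≤ ∑ i ∈ s, arctan (x i) :=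
  le_sum_of_subadditive_on_pred arctan (0 ≤ ·) arctan_zero.le
    (fun _ _ ha hb => arctan_add_le_of_nonneg ha hb) (fun _ _ => add_nonneg) x hx

theorem sum_arctan_le_card_mul {ι : Type*} [Fintype ι] (x : ι → ℝ) :
    ∑ i, arctan (x i) ≤ Fintype.card ι * (π / 2) := by
  simpa using sum_le_card_nsmul univ (fun i => arctan (x i)) (π / 2)
    fun i _ => (arctan_lt_pi_div_two _).le

theorem lt_arctan_iff {θ c : ℝ} (hθ : -(π / 2) < θ) : θ < arctan c ↔ θ < π / 2 ∧ tan θ < c := by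
  refine ⟨fun h => ⟨h.trans (arctan_lt_pi_div_two c), ?_⟩, fun ⟨h, hc⟩ => ?_⟩
  · simpa using tan_lt_tan_of_lt_of_lt_pi_div_two hθ (arctan_lt_pi_div_two c) h
  · simpa [arctan_tan hθ h] using arctan_strictMono hc

end Real

theorem HasDerivAt.const_div_one_add_sq {f : ℝ → ℝ} {d t : ℝ} (hf : HasDerivAt f d t) :
    HasDerivAt (fun s => d / (1 + f s ^ 2)) (-(2 * f t * (d / (1 + f t ^ 2)) ^ 2)) t := by
  have h0 : 1 + f t ^ 2 ≠ 0 := by positivity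
  refine ((hasDerivAt_const t d).div ((hf.fun_pow 2).const_add 1) h0).congr_deriv ?_
  field_simp
  ring

theorem convexOn_of_convexOn_lineMap {𝕜 E β : Type*}
    [Field 𝕜] [LinearOrder 𝕜] [IsStrictOrderedRing 𝕜] [AddCommGroup E] [Module 𝕜 E]
    [AddCommGroup β] [PartialOrder β] [Module 𝕜 β]
    {s : Set E} {f : E → β} (hs : Convex 𝕜 s)
    (hf : ∀ x ∈ s, ∀ y ∈ s,
      ConvexOn 𝕜 (AffineMap.lineMap (k := 𝕜) x y ⁻¹' s) (f ∘ AffineMap.lineMap x y)) :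
    ConvexOn 𝕜 s f := by
  refine ⟨hs, fun x hx y hy a b ha hb hab => ?_⟩
  have h := (hf x hx y hy).2 (x := 0) (y := 1) (by simpa) (by simpa) ha hb hab
  rw [smul_zero, smul_eq_mul, mul_one, zero_add] at h
  simpa [AffineMap.lineMap_apply_module, ← eq_sub_of_add_eq hab] using h

theorem convexOn_tan_comp {I : Set ℝ} (hI : Convex ℝ I) {u u' u'' : ℝ → ℝ}
    (hu : ∀ t ∈ I, u t ∈ Ioo (-(π / 2)) (π / 2))
    (hu' : ∀ t ∈ I, HasDerivAt u (u' t) t) (hu'' : ∀ t ∈ I, HasDerivAt u' (u'' t) t)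
    (h : ∀ t ∈ I, 0 ≤ 2 * tan (u t) * u' t ^ 2 + u'' t) :
    ConvexOn ℝ I (fun t => tan (u t)) := by
  have hg' : ∀ t ∈ I, HasDerivAt (fun t => tan (u t)) ((1 + tan (u t) ^ 2) * u' t) t := by
    intro t ht
    have hcos : cos (u t) ≠ 0 := (cos_pos_of_mem_Ioo (hu t ht)).ne'
    refine ((hasDerivAt_tan hcos).comp t (hu' t ht)).congr_deriv ?_
    rw [one_div, ← inv_one_add_tan_sq hcos, inv_inv]
  have hg'' : ∀ t ∈ I, HasDerivAt (fun t => (1 + tan (u t) ^ 2) * u' t)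
      ((1 + tan (u t) ^ 2) * (2 * tan (u t) * u' t ^ 2 + u'' t)) t := by
    intro t ht
    refine ((((hg' t ht).fun_pow 2).const_add 1).mul (hu'' t ht)).congr_deriv ?_
    push_cast
    ring
  refine convexOn_of_hasDerivWithinAt2_nonneg hI
    (fun t ht => (hg' t ht).continuousAt.continuousWithinAt)
    (fun t ht => (hg' t (interior_subset ht)).hasDerivWithinAt)
    (fun t ht => (hg'' t (interior_subset ht)).hasDerivWithinAt)
    fun t ht => mul_nonneg (by positivity) (h t (interior_subset ht))

theorem mul_sq_sum_le_sum_mul_sq {ι : Type*} {s : Finset ι} {x : ι → ℝ} (hx : ∀ i ∈ s, 0 < x i)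
    {y : ℝ} (hy : 0 < y) (h : ∑ i ∈ s, (x i)⁻¹ ≤ y⁻¹) (a : ι → ℝ) :
    y * (∑ i ∈ s, a i) ^ 2 ≤ ∑ i ∈ s, x i * a i ^ 2 := by
  have hT : 0 ≤ ∑ i ∈ s, x i * a i ^ 2 :=
    sum_nonneg fun i hi => mul_nonneg (hx i hi).le (sq_nonneg _)
  have hCS : (∑ i ∈ s, a i) ^ 2 ≤ (∑ i ∈ s, x i * a i ^ 2) * ∑ i ∈ s, (x i)⁻¹ := by
    refine sum_sq_le_sum_mul_sum_of_sq_le_mul s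
      (fun i hi => mul_nonneg (hx i hi).le (sq_nonneg _))
      (fun i hi => (inv_pos.2 (hx i hi)).le) fun i hi => ?_
    rw [mul_assoc, mul_comm, mul_assoc, inv_mul_cancel₀ (hx i hi).ne', mul_one]
  calc y * (∑ i ∈ s, a i) ^ 2 ≤ y * ((∑ i ∈ s, x i * a i ^ 2) * y⁻¹) := by
        gcongr
        exact hCS.trans (mul_le_mul_of_nonneg_left h hT)
    _ = ∑ i ∈ s, x i * a i ^ 2 := by field_simp

theorem sum_mul_sq_nonneg_of_sum_arctan_gt {ι : Type*} [Fintype ι] {x : ι → ℝ}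
    (hx : ((Fintype.card ι : ℝ) - 2) * (π / 2) < ∑ i, arctan (x i)) {a : ι → ℝ}
    (ha : ∑ i, a i = 0) : 0 ≤ ∑ i, x i * a i ^ 2 := by
  classical
  by_cases hnonneg : ∀ i, 0 ≤ x i
  · exact sum_nonneg fun i _ => mul_nonneg (hnonneg i) (sq_nonneg _)
  simp only [not_forall, not_le] at hnonneg
  obtain ⟨k, hk⟩ := hnonneg
  -- the complementary angles `π / 2 - arctan (x i)` are positive and add up to less than `π`
  have hangles : ∑ i, (π / 2 - arctan (x i)) < π := by
    rw [sum_sub_distrib, sum_const, card_univ, nsmul_eq_mul]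
    linarith
  have hpos : ∀ i ∈ univ.erase k, 0 < x i := by
    intro i hi
    have hik := add_le_sum (fun j _ => sub_nonneg.2 (arctan_lt_pi_div_two (x j)).le)
      (mem_univ i) (mem_univ k) (ne_of_mem_erase hi)
    have hk' := arctan_lt_zero.2 hk
    exact arctan_pos.1 (by linarith)
  have hinv : ∑ i ∈ univ.erase k, (x i)⁻¹ ≤ (-x k)⁻¹ := by
    refine (arctan_lt_arctan_iff.1 ?_).le
    calc arctan (∑ i ∈ univ.erase k, (x i)⁻¹)
        ≤ ∑ i ∈ univ.erase k, arctan (x i)⁻¹ :=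
          arctan_sum_le_sum_arctan _ fun i hi => (inv_pos.2 (hpos i hi)).le
      _ = ∑ i ∈ univ.erase k, (π / 2 - arctan (x i)) :=
          sum_congr rfl fun i hi => arctan_inv_of_pos (hpos i hi)
      _ < π - (π / 2 - arctan (x k)) := by
          linarith [add_sum_erase univ (fun i => π / 2 - arctan (x i)) (mem_univ k)]
      _ = arctan (-x k)⁻¹ := by
          rw [arctan_inv_of_pos (neg_pos.2 hk), arctan_neg]; ring
  have hCS := mul_sq_sum_le_sum_mul_sq hpos (neg_pos.2 hk) hinv a
  rw [sum_erase_eq_sub (mem_univ k), ha, zero_sub, neg_sq] at hCS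
  rw [← add_sum_erase univ _ (mem_univ k)]
  linarith

theorem sum_mul_sq_add_mul_sq_sum_nonneg {ι : Type*} [Fintype ι] {x : ι → ℝ} {r : ℝ}
    (h : ((Fintype.card ι : ℝ) - 1) * (π / 2) < ∑ i, arctan (x i) + arctan r) (a : ι → ℝ) :
    0 ≤ ∑ i, x i * a i ^ 2 + r * (∑ i, a i) ^ 2 := by
  have key := sum_mul_sq_nonneg_of_sum_arctan_gt (x := fun o : Option ι => o.elim r x)
    (a := fun o => o.elim (-∑ i, a i) a)
    (by simp only [Fintype.sum_option, Fintype.card_option, Option.elim]; push_cast; linarith)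
    (by rw [Fintype.sum_option]; simp)
  rw [Fintype.sum_option] at key
  simp only [Option.elim, neg_sq] at key
  linarith

theorem convexOn_tan_sub_sum_arctan {ι : Type*} [Fintype ι] {σ : ℝ}
    (hσ : ((Fintype.card ι : ℝ) - 1) * (π / 2) < σ)
    (hD : Convex ℝ {μ : ι → ℝ | σ - π / 2 < ∑ i, arctan (μ i)}) :
    ConvexOn ℝ {μ : ι → ℝ | σ - π / 2 < ∑ i, arctan (μ i)}
      fun μ => tan (σ - ∑ i, arctan (μ i)) := by
  refine convexOn_of_convexOn_lineMap hD fun x _ y _ => ?_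
  set ℓ : ι → ℝ → ℝ := fun i => AffineMap.lineMap (x i) (y i)
  set a : ℝ → ι → ℝ := fun t i => (y i - x i) / (1 + ℓ i t ^ 2)
  set u : ℝ → ℝ := fun t => σ - ∑ i, arctan (ℓ i t)
  have hℓ : ∀ i t, HasDerivAt (ℓ i) (y i - x i) t := fun i t => AffineMap.hasDerivAt_lineMap
  have hu : ∀ t ∈ AffineMap.lineMap x y ⁻¹' {μ : ι → ℝ | σ - π / 2 < ∑ i, arctan (μ i)},
      u t ∈ Ioo (-(π / 2)) (π / 2) := by
    intro t ht
    have hsum := sum_arctan_le_card_mul fun i => ℓ i t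
    change σ - π / 2 < ∑ i, arctan (ℓ i t) at ht
    exact ⟨by linarith, by linarith⟩
  refine convexOn_tan_comp (hD.affine_preimage (AffineMap.lineMap x y)) hu
    (u' := fun t => -∑ i, a t i) (u'' := fun t => 2 * ∑ i, ℓ i t * a t i ^ 2)
    (fun t _ => ?_) (fun t _ => ?_) fun t ht => ?_
  · refine ((HasDerivAt.fun_sum fun i _ => (hℓ i t).arctan).const_sub σ).congr_deriv ?_
    simp only [a, one_div_mul_eq_div]
  · refine (HasDerivAt.fun_sum fun i _ => (hℓ i t).const_div_one_add_sq).neg.congr_deriv ?_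
    simp only [a, sum_neg_distrib, neg_neg, mul_sum, mul_assoc]
  · have hr : ((Fintype.card ι : ℝ) - 1) * (π / 2) <
        ∑ i, arctan (ℓ i t) + arctan (tan (u t)) := by
      rw [arctan_tan (hu t ht).1 (hu t ht).2]
      simpa [u] using hσ
    have hform := sum_mul_sq_add_mul_sq_sum_nonneg hr (a t)
    change 0 ≤ 2 * tan (u t) * (-∑ i, a t i) ^ 2 + 2 * ∑ i, ℓ i t * a t i ^ 2
    rw [neg_sq]
    linarith

theorem setOf_lt_sum_arctan_succ_eq {m : ℕ} {σ : ℝ} (hσ : ((m : ℝ) - 1) * (π / 2) < σ) :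
    {lam : Fin (m + 1) → ℝ | σ < ∑ i, arctan (lam i)} =
      (fun lam : Fin (m + 1) → ℝ => ((Fin.tail lam : Fin m → ℝ), lam 0)) ⁻¹'
        {p | p.1 ∈ {μ : Fin m → ℝ | σ - π / 2 < ∑ i, arctan (μ i)} ∧
          tan (σ - ∑ i, arctan (p.1 i)) < p.2} := by
  ext lam
  have hsum := sum_arctan_le_card_mul fun i : Fin m => lam i.succ
  rw [Fintype.card_fin] at hsum
  simp only [Set.mem_preimage, mem_ofPred_eq, Fin.tail, Fin.sum_univ_succ]
  rw [← sub_lt_iff_lt_add, lt_arctan_iff (by linarith)]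
  constructor <;> rintro ⟨h1, h2⟩ <;> exact ⟨by linarith, h2⟩

theorem convex_setOf_lt_sum_arctan {n : ℕ} {σ : ℝ} (hσ : ((n : ℝ) - 2) * (π / 2) < σ) :
    Convex ℝ {lam : Fin n → ℝ | σ < ∑ i, arctan (lam i)} := by
  induction n generalizing σ with
  | zero => exact Set.subsingleton_of_subsingleton.convex
  | succ m ih =>
    push_cast at hσ
    have hφ := convexOn_tan_sub_sum_arctan (by rw [Fintype.card_fin]; linarith)
      (ih (σ := σ - π / 2) (by linarith))
    rw [setOf_lt_sum_arctan_succ_eq (by linarith)]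
    exact hφ.convex_strict_epigraph.is_linear_preimage ⟨fun _ _ => rfl, fun _ _ => rfl⟩

theorem lagrangian_superlevel_convex (n : ℕ) (σ : ℝ)
    (hσ : σ ∈ Set.Ioo ((n - 2 : ℝ) * (π / 2)) ((n : ℝ) * (π / 2))) :
    Convex ℝ {lam : Fin n → ℝ | σ < ∑ i, arctan (lam i)} :=
  convex_setOf_lt_sum_arctan hσ.1
end
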